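/- arXiv:1709.07270 — 6 statements merged into one kernel-verified Lean document; each statement's English description precedes it below -/
import Mathlib

section
/- Let G(s) = C (sE - A)⁻¹ B be the transfer function of a full-order model and G_r(s) = C_r (sE_r - A_r)⁻¹ B_r the transfer function of the reduced model obtained by the Petrov-Galerkin projection E_r = WᵀEV, A_r = WᵀAV, B_r = WᵀB, C_r = CV. Suppose σ ∈ ℂ and r ∈ ℂ^m are such that sE - A and sE_r - A_r are invertible at s = σ, and (A - σE)⁻¹ B r lies in the column space of V. Then G(σ) r = G_r(σ) r. -/
/-!
Write `K = σE - A`. The hypothesis says that the state `x = K⁻¹ B r` is `V y` for some `y`.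
Then `(Wᵀ K V) y = Wᵀ K x = Wᵀ B r`, so `y` is the state of the reduced system driven by the
same input, and both models read the same output `C x = (C V) y`.
-/

open Matrix

namespace Matrix

variable {ι κ R : Type*} [Fintype ι] [DecidableEq ι] [Fintype κ] [DecidableEq κ] [CommRing R]

theorem inv_neg_of_isUnit {K : Matrix ι ι R} (hK : IsUnit K) : (-K)⁻¹ = -K⁻¹ :=
  inv_eq_left_inv <| by rw [neg_mul_neg, nonsing_inv_mul K ((isUnit_iff_isUnit_det K).mp hK)]

theorem inv_mulVec_projection_eq {K : Matrix ι ι R} (W : Matrix κ ι R) (V : Matrix ι κ R)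
    (hK : IsUnit K) (hKr : IsUnit (W * K * V)) {b : ι → R} {y : κ → R}
    (hy : V *ᵥ y = K⁻¹ *ᵥ b) : (W * K * V)⁻¹ *ᵥ (W *ᵥ b) = y := by
  have hKKinv : K * K⁻¹ = 1 := mul_nonsing_inv K ((isUnit_iff_isUnit_det K).mp hK)
  have hWb : W *ᵥ b = (W * K * V) *ᵥ y := by
    rw [← mulVec_mulVec, hy, mulVec_mulVec, Matrix.mul_assoc, hKKinv, Matrix.mul_one]
  rw [hWb, mulVec_mulVec, nonsing_inv_mul _ ((isUnit_iff_isUnit_det _).mp hKr), one_mulVec]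

theorem mul_inv_mul_mulVec_eq_projection {π μ : Type*} [Fintype μ] {K : Matrix ι ι R}
    (B : Matrix ι μ R) (C : Matrix π ι R) (W : Matrix κ ι R) (V : Matrix ι κ R)
    (hK : IsUnit K) (hKr : IsUnit (W * K * V)) {r : μ → R} {y : κ → R}
    (hy : V *ᵥ y = K⁻¹ *ᵥ (B *ᵥ r)) :
    (C * K⁻¹ * B) *ᵥ r = (C * V * (W * K * V)⁻¹ * (W * B)) *ᵥ r := by
  calc (C * K⁻¹ * B) *ᵥ r = C *ᵥ (V *ᵥ y) := by rw [hy, mulVec_mulVec, mulVec_mulVec]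
    _ = C *ᵥ (V *ᵥ ((W * K * V)⁻¹ *ᵥ (W *ᵥ (B *ᵥ r)))) := by
        rw [inv_mulVec_projection_eq W V hK hKr hy]
    _ = (C * V * (W * K * V)⁻¹ * (W * B)) *ᵥ r := by simp only [mulVec_mulVec, Matrix.mul_assoc]

end Matrix

theorem right_tangential_interpolation
    {n m p q : ℕ} (A E : Matrix (Fin n) (Fin n) ℂ)
    (B : Matrix (Fin n) (Fin m) ℂ) (C : Matrix (Fin p) (Fin n) ℂ)
    (V W : Matrix (Fin n) (Fin q) ℂ)
    (σ : ℂ) (r : Fin m → ℂ)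
    (hfull : IsUnit (σ • E - A))
    (hred : IsUnit (σ • (Wᵀ * E * V) - Wᵀ * A * V))
    (hmem : ∃ z : Fin q → ℂ, V *ᵥ z = (A - σ • E)⁻¹ *ᵥ (B *ᵥ r)) :
    (C * (σ • E - A)⁻¹ * B) *ᵥ r
      = ((C * V) * (σ • (Wᵀ * E * V) - Wᵀ * A * V)⁻¹ * (Wᵀ * B)) *ᵥ r := by
  obtain ⟨z, hz⟩ := hmem
  have hKr : σ • (Wᵀ * E * V) - Wᵀ * A * V = Wᵀ * (σ • E - A) * V := by
    rw [Matrix.mul_sub, Matrix.sub_mul, Matrix.mul_smul, Matrix.smul_mul]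
  have hy : V *ᵥ (-z) = (σ • E - A)⁻¹ *ᵥ (B *ᵥ r) := by
    rw [mulVec_neg, hz, ← neg_sub, inv_neg_of_isUnit hfull, neg_mulVec, neg_neg]
  rw [hKr] at hred ⊢
  exact mul_inv_mul_mulVec_eq_projection B C Wᵀ V hfull hred hy
end

section
/- Let G(s) = C (sE - A)⁻¹ B and let G_r be obtained by Petrov-Galerkin projection with matrices V, W ∈ ℂ^{n×q}. Suppose σ ∈ ℂ and l ∈ ℂ^p are such that σE - A and σE_r - A_r are invertible and (A - σE)⁻ᵀ Cᵀ l lies in the column space of W. Then lᵀ G(σ) = lᵀ G_r(σ). -/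
/-!
Write `K = σE - A`, so that the reduced pencil is `Kᵣ = Wᵀ K V`. The hypothesis says that the
row vector `lᵀ C K⁻¹` equals `-zᵀ Wᵀ`, i.e. lies in the row space of `Wᵀ`. Multiplying by `K` gives
`lᵀ C = -zᵀ Wᵀ K`, hence `lᵀ C V = -zᵀ Kᵣ` and `lᵀ C V Kᵣ⁻¹ Wᵀ B = -zᵀ Wᵀ B = lᵀ C K⁻¹ B`.
-/

open Matrix

namespace Matrix

variable {ι κ μ R : Type*} [Fintype ι] [CommRing R]

theorem mul_smul_sub_mul (L : Matrix κ ι R) (E A : Matrix ι ι R) (V : Matrix ι κ R) (σ : R) :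
    L * (σ • E - A) * V = σ • (L * E * V) - L * A * V := by
  rw [Matrix.mul_sub, Matrix.sub_mul, Matrix.mul_smul, Matrix.smul_mul]

variable [DecidableEq ι]

theorem nonsing_inv_neg (A : Matrix ι ι R) : (-A)⁻¹ = -A⁻¹ := by
  by_cases h : IsUnit A.det
  · exact inv_eq_left_inv (by rw [neg_mul_neg, nonsing_inv_mul A h])
  · have h' : ¬IsUnit (-A).det := by
      rwa [det_neg, IsUnit.mul_iff, and_iff_right (isUnit_neg_one.pow _)]
    rw [nonsing_inv_apply_not_isUnit A h, nonsing_inv_apply_not_isUnit _ h', neg_zero]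

variable [Fintype κ] [DecidableEq κ]

theorem vecMul_nonsing_inv_mul_eq_of_vecMul_nonsing_inv_eq {K : Matrix ι ι R}
    {L : Matrix κ ι R} (V : Matrix ι κ R) (hK : IsUnit K) (hKr : IsUnit (L * K * V))
    {x : ι → R} {z : κ → R} (hz : x ᵥ* K⁻¹ = z ᵥ* L) (B : Matrix ι μ R) :
    x ᵥ* (K⁻¹ * B) = (x ᵥ* V) ᵥ* ((L * K * V)⁻¹ * (L * B)) := by
  have hx : x = z ᵥ* L ᵥ* K := by
    rw [← hz, vecMul_vecMul, nonsing_inv_mul K ((isUnit_iff_isUnit_det K).mp hK), vecMul_one]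
  have hxV : x ᵥ* V = z ᵥ* (L * K * V) := by
    rw [hx, vecMul_vecMul, vecMul_vecMul, Matrix.mul_assoc]
  rw [← vecMul_vecMul, hz, hxV, vecMul_vecMul z (L * K * V), ← Matrix.mul_assoc (L * K * V),
    mul_nonsing_inv _ ((isUnit_iff_isUnit_det _).mp hKr), Matrix.one_mul, vecMul_vecMul]

end Matrix

theorem left_tangential_interpolation
    {n m p q : ℕ} (A E : Matrix (Fin n) (Fin n) ℂ)
    (B : Matrix (Fin n) (Fin m) ℂ) (C : Matrix (Fin p) (Fin n) ℂ)
    (V W : Matrix (Fin n) (Fin q) ℂ)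
    (σ : ℂ) (l : Fin p → ℂ)
    (hfull : IsUnit (σ • E - A))
    (hred : IsUnit (σ • (Wᵀ * E * V) - Wᵀ * A * V))
    (hmem : ∃ z : Fin q → ℂ, W *ᵥ z = ((A - σ • E)⁻¹)ᵀ *ᵥ (Cᵀ *ᵥ l)) :
    l ᵥ* (C * (σ • E - A)⁻¹ * B)
      = l ᵥ* ((C * V) * (σ • (Wᵀ * E * V) - Wᵀ * A * V)⁻¹ * (Wᵀ * B)) := by
  obtain ⟨z, hz⟩ := hmem
  have hz' : (l ᵥ* C) ᵥ* (σ • E - A)⁻¹ = (-z) ᵥ* Wᵀ := by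
    rw [neg_vecMul, vecMul_transpose, hz, ← neg_sub, nonsing_inv_neg, mulVec_transpose,
      mulVec_transpose, vecMul_neg]
  rw [← mul_smul_sub_mul] at hred ⊢
  rw [Matrix.mul_assoc C, ← vecMul_vecMul,
    vecMul_nonsing_inv_mul_eq_of_vecMul_nonsing_inv_eq V hfull hred hz']
  simp only [vecMul_vecMul, Matrix.mul_assoc]
end

section
/- Let G(s) = C (sE - A)⁻¹ B and let G_r be obtained by Petrov-Galerkin projection with matrices V, W ∈ ℂ^{n×q}. Suppose σ ∈ ℂ, r ∈ ℂ^m, l ∈ ℂ^p are such that σE - A and σE_r - A_r are invertible, (A - σE)⁻¹ B r ∈ range(V), and (A - σE)⁻ᵀ Cᵀ l ∈ range(W). Then in addition to G(σ)r = G_r(σ)r and lᵀG(σ) = lᵀG_r(σ), the derivatives match tangentially: lᵀ G'(σ) r = lᵀ G_r'(σ) r, where G'(s) = -C (sE - A)⁻¹ E (sE - A)⁻¹ B. -/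
/-!
Write `K = σE - A`, so that `σE_r - A_r = WᵀKV`. The subspace conditions say that
`K⁻¹Br = Vv` and `lᵀCK⁻¹ = wᵀWᵀ` for some `v, w`; projecting the equations `KVv = Br` and
`wᵀWᵀK = lᵀC` gives `(WᵀKV)v = WᵀBr` and `wᵀ(WᵀKV) = lᵀCV`, i.e. the reduced model
solves for the same `v` and `w`. Hence both transfer functions send `r` to `CVv` and `lᵀ`
to `wᵀWᵀB`, and both derivatives have the value `-wᵀ(WᵀEV)v` in the bitangential direction.
-/

open Matrix

namespace Matrix

variable {R : Type*} [CommRing R] {ι κ : Type*} [Fintype ι]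

theorem inv_neg_of_isUnit_det [DecidableEq ι] {K : Matrix ι ι R} (hK : IsUnit K.det) :
    (-K)⁻¹ = -K⁻¹ :=
  inv_eq_right_inv (by rw [neg_mul_neg, mul_nonsing_inv _ hK])

theorem inv_mulVec_eq_of_mulVec_eq [DecidableEq ι] {K : Matrix ι ι R} (hK : IsUnit K.det)
    {x b : ι → R} (h : K *ᵥ x = b) : K⁻¹ *ᵥ b = x := by
  rw [← h, mulVec_mulVec, nonsing_inv_mul _ hK, one_mulVec]

theorem vecMul_inv_eq_of_vecMul_eq [DecidableEq ι] {K : Matrix ι ι R} (hK : IsUnit K.det)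
    {x c : ι → R} (h : x ᵥ* K = c) : c ᵥ* K⁻¹ = x := by
  rw [← h, vecMul_vecMul, mul_nonsing_inv _ hK, vecMul_one]

theorem smul_mul_mul_sub_mul_mul (σ : R) (P : Matrix κ ι R) (E A : Matrix ι ι R)
    (Q : Matrix ι κ R) : σ • (P * E * Q) - P * A * Q = P * (σ • E - A) * Q := by
  rw [Matrix.mul_sub, Matrix.sub_mul, Matrix.mul_smul, Matrix.smul_mul]

end Matrix

section PetrovGalerkin

variable {R : Type*} [CommRing R] {ι κ : Type*} [Fintype ι] [Fintype κ] [DecidableEq κ]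
  {K : Matrix ι ι R} {P : Matrix κ ι R} {Q : Matrix ι κ R}

theorem projected_inv_mulVec_eq (hKr : IsUnit (P * K * Q).det) {v : κ → R} {b : ι → R}
    (h : K *ᵥ (Q *ᵥ v) = b) : (P * K * Q)⁻¹ *ᵥ (P *ᵥ b) = v :=
  inv_mulVec_eq_of_mulVec_eq hKr (by rw [← mulVec_mulVec, ← mulVec_mulVec, h])

theorem vecMul_projected_inv_eq (hKr : IsUnit (P * K * Q).det) {w : κ → R} {c : ι → R}
    (h : (w ᵥ* P) ᵥ* K = c) : (c ᵥ* Q) ᵥ* (P * K * Q)⁻¹ = w :=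
  vecMul_inv_eq_of_vecMul_eq hKr (by rw [← vecMul_vecMul, ← vecMul_vecMul, h])

variable {μ ν : Type*} [Fintype μ]

theorem right_tangential_interpolation_s6 [DecidableEq ι] (hK : IsUnit K.det)
    (hKr : IsUnit (P * K * Q).det) (C : Matrix ν ι R) (B : Matrix ι μ R) {r : μ → R} {v : κ → R}
    (h : K *ᵥ (Q *ᵥ v) = B *ᵥ r) :
    (C * K⁻¹ * B) *ᵥ r = (C * Q * (P * K * Q)⁻¹ * (P * B)) *ᵥ r := by
  simp only [← mulVec_mulVec]
  rw [projected_inv_mulVec_eq hKr h, inv_mulVec_eq_of_mulVec_eq hK h]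

theorem left_tangential_interpolation_s6 [DecidableEq ι] (hK : IsUnit K.det)
    (hKr : IsUnit (P * K * Q).det) (C : Matrix μ ι R) (B : Matrix ι ν R) {l : μ → R} {w : κ → R}
    (h : (w ᵥ* P) ᵥ* K = l ᵥ* C) :
    l ᵥ* (C * K⁻¹ * B) = l ᵥ* (C * Q * (P * K * Q)⁻¹ * (P * B)) := by
  simp only [← vecMul_vecMul]
  rw [vecMul_projected_inv_eq hKr h, vecMul_inv_eq_of_vecMul_eq hK h]

theorem hermite_tangential_interpolation [DecidableEq ι] [Fintype ν] (hK : IsUnit K.det)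
    (hKr : IsUnit (P * K * Q).det) (C : Matrix μ ι R) (E : Matrix ι ι R) (B : Matrix ι ν R)
    {l : μ → R} {r : ν → R} {v w : κ → R}
    (hv : K *ᵥ (Q *ᵥ v) = B *ᵥ r) (hw : (w ᵥ* P) ᵥ* K = l ᵥ* C) :
    l ⬝ᵥ ((C * K⁻¹ * E * K⁻¹ * B) *ᵥ r)
      = l ⬝ᵥ ((C * Q * (P * K * Q)⁻¹ * (P * E * Q) * (P * K * Q)⁻¹ * (P * B)) *ᵥ r) := by
  -- both sides equal `w ⬝ᵥ (P * E * Q) *ᵥ v`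
  simp only [← mulVec_mulVec]
  rw [inv_mulVec_eq_of_mulVec_eq hK hv, projected_inv_mulVec_eq hKr hv]
  simp only [dotProduct_mulVec]
  rw [vecMul_inv_eq_of_vecMul_eq hK hw, vecMul_projected_inv_eq hKr hw]

end PetrovGalerkin

theorem bitangential_hermite_interpolation
    {n m p q : ℕ} (A E : Matrix (Fin n) (Fin n) ℂ)
    (B : Matrix (Fin n) (Fin m) ℂ) (C : Matrix (Fin p) (Fin n) ℂ)
    (V W : Matrix (Fin n) (Fin q) ℂ)
    (σ : ℂ) (r : Fin m → ℂ) (l : Fin p → ℂ)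
    (hfull : IsUnit (σ • E - A))
    (hred : IsUnit (σ • (Wᵀ * E * V) - Wᵀ * A * V))
    (hmemV : ∃ z : Fin q → ℂ, V *ᵥ z = (A - σ • E)⁻¹ *ᵥ (B *ᵥ r))
    (hmemW : ∃ z : Fin q → ℂ, W *ᵥ z = ((A - σ • E)⁻¹)ᵀ *ᵥ (Cᵀ *ᵥ l)) :
    (C * (σ • E - A)⁻¹ * B) *ᵥ r
        = ((C * V) * (σ • (Wᵀ * E * V) - Wᵀ * A * V)⁻¹ * (Wᵀ * B)) *ᵥ r
    ∧ l ᵥ* (C * (σ • E - A)⁻¹ * B)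
        = l ᵥ* ((C * V) * (σ • (Wᵀ * E * V) - Wᵀ * A * V)⁻¹ * (Wᵀ * B))
    ∧ l ⬝ᵥ ((-(C * (σ • E - A)⁻¹ * E * (σ • E - A)⁻¹ * B)) *ᵥ r)
        = l ⬝ᵥ ((-((C * V) * (σ • (Wᵀ * E * V) - Wᵀ * A * V)⁻¹ * (Wᵀ * E * V)
            * (σ • (Wᵀ * E * V) - Wᵀ * A * V)⁻¹ * (Wᵀ * B))) *ᵥ r) := by
  rw [smul_mul_mul_sub_mul_mul] at hred ⊢
  rw [← neg_sub] at hmemV hmemW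
  set K := σ • E - A
  have hK : IsUnit K.det := (isUnit_iff_isUnit_det K).mp hfull
  have hKr := (isUnit_iff_isUnit_det _).mp hred
  obtain ⟨v, hv⟩ := hmemV
  obtain ⟨w, hw⟩ := hmemW
  have hv' : K *ᵥ (V *ᵥ -v) = B *ᵥ r := by
    rw [mulVec_neg, hv, inv_neg_of_isUnit_det hK, neg_mulVec, neg_neg, mulVec_mulVec,
      mul_nonsing_inv _ hK, one_mulVec]
  have hw' : (-w ᵥ* Wᵀ) ᵥ* K = l ᵥ* C := by
    rw [neg_vecMul, vecMul_transpose, hw, mulVec_transpose, mulVec_transpose,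
      inv_neg_of_isUnit_det hK, vecMul_neg, neg_neg, vecMul_vecMul,
      nonsing_inv_mul _ hK, vecMul_one]
  refine ⟨right_tangential_interpolation_s6 hK hKr C B hv',
    left_tangential_interpolation_s6 hK hKr C B hw', ?_⟩
  simp only [neg_mulVec, dotProduct_neg, neg_inj, Matrix.mul_assoc]
  simpa only [Matrix.mul_assoc] using hermite_tangential_interpolation hK hKr C E B hv' hw'
end

section
/- Let G(s) = c^T (sE - A)⁻¹ b be a SISO transfer function (b, c ∈ ℂ^n). Suppose σ ∈ ℂ with A - σE invertible, and let V ∈ ℂ^{n×k} have column space containing the Krylov subspace span{v₁, …, v_k} where v₁ = (A - σE)⁻¹ b and v_{j+1} = (A - σE)⁻¹ E v_j. Let G_r be obtained via one-sided projection with W = V (assuming V^T E V and σE_r - A_r invertible). Then G^{(i)}(σ) = G_r^{(i)}(σ) for i = 0, …, k-1. -/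
/-!
Write `N = A - σE`, so that the Krylov vectors are `vⱼ = (N⁻¹E)ʲ N⁻¹ b` and the derivatives of
`G` at `σ` are, up to the factor `(-1)ʲ j!` and the sign `(-1)ʲ⁺¹` from `σE - A = -N`,
the moments `cᵀ vⱼ`; the same holds for the reduced
model with `Nᵣ = Vᵀ N V`, `Eᵣ = Vᵀ E V`. Galerkin projection is exact on `range V`: if
`N (V z) = y` then `Nᵣ⁻¹ Vᵀ y = z`. Since `N vⱼ₊₁ = E vⱼ`, induction on `j` shows that `V` maps
the reduced Krylov vectors onto the full ones as long as these lie in `range V`, and then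
`cᵀ vⱼ = cᵀ V vᵣⱼ = (Vᵀ c)ᵀ vᵣⱼ`.
-/

open Matrix

namespace Matrix

variable {m p K : Type*} [Fintype m] [Fintype p] [DecidableEq p] [CommRing K]

theorem inv_transpose_mul_mul_mulVec_eq (N : Matrix m m K) (V : Matrix m p K)
    (hNr : IsUnit (Vᵀ * N * V)) {z : p → K} {y : m → K} (hz : N *ᵥ (V *ᵥ z) = y) :
    (Vᵀ * N * V)⁻¹ *ᵥ (Vᵀ *ᵥ y) = z := by
  calc (Vᵀ * N * V)⁻¹ *ᵥ (Vᵀ *ᵥ y) = ((Vᵀ * N * V)⁻¹ * (Vᵀ * N * V)) *ᵥ z := by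
        simp only [← hz, mulVec_mulVec, Matrix.mul_assoc]
    _ = z := by rw [nonsing_inv_mul _ ((isUnit_iff_isUnit_det _).mp hNr), one_mulVec]

variable [DecidableEq m]

noncomputable def krylovVec (N E : Matrix m m K) (b : m → K) (j : ℕ) : m → K :=
  (N⁻¹ * E) ^ j *ᵥ (N⁻¹ *ᵥ b)

theorem krylovVec_zero (N E : Matrix m m K) (b : m → K) : krylovVec N E b 0 = N⁻¹ *ᵥ b := by
  simp [krylovVec]

theorem krylovVec_succ (N E : Matrix m m K) (b : m → K) (j : ℕ) :
    krylovVec N E b (j + 1) = N⁻¹ *ᵥ (E *ᵥ krylovVec N E b j) := by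
  simp only [krylovVec, pow_succ', mulVec_mulVec, Matrix.mul_assoc]

theorem inv_neg_of_isUnit_s7 {N : Matrix m m K} (hN : IsUnit N) : (-N)⁻¹ = -N⁻¹ :=
  inv_eq_left_inv <| by rw [neg_mul_neg, nonsing_inv_mul _ ((isUnit_iff_isUnit_det N).mp hN)]

theorem krylovVec_neg {N : Matrix m m K} (hN : IsUnit N) (E : Matrix m m K) (b : m → K)
    (j : ℕ) : krylovVec (-N) E b j = (-1 : K) ^ (j + 1) • krylovVec N E b j := by
  induction j with
  | zero => simp [krylovVec_zero, inv_neg_of_isUnit_s7 hN, neg_mulVec]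
  | succ j ih =>
    rw [krylovVec_succ, krylovVec_succ, ih, inv_neg_of_isUnit_s7 hN, neg_mulVec, mulVec_smul,
      mulVec_smul, pow_succ _ (j + 1), mul_neg_one, neg_smul]

theorem mulVec_krylovVec_transpose_mul_mul {N : Matrix m m K} (hN : IsUnit N)
    (E : Matrix m m K) (b : m → K) (V : Matrix m p K) (hNr : IsUnit (Vᵀ * N * V)) {k : ℕ}
    (hspan : ∀ j < k, ∃ z : p → K, V *ᵥ z = krylovVec N E b j) :
    ∀ j < k, V *ᵥ krylovVec (Vᵀ * N * V) (Vᵀ * E * V) (Vᵀ *ᵥ b) j = krylovVec N E b j := by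
  have hNcancel : ∀ x : m → K, N *ᵥ (N⁻¹ *ᵥ x) = x := fun x => by
    rw [mulVec_mulVec, mul_nonsing_inv _ ((isUnit_iff_isUnit_det N).mp hN), one_mulVec]
  intro j hj
  obtain ⟨z, hz⟩ := hspan j hj
  suffices krylovVec (Vᵀ * N * V) (Vᵀ * E * V) (Vᵀ *ᵥ b) j = z by rw [this, hz]
  induction j generalizing z with
  | zero =>
    rw [krylovVec_zero]
    exact inv_transpose_mul_mul_mulVec_eq N V hNr (by rw [hz, krylovVec_zero, hNcancel])
  | succ j ih =>
    obtain ⟨w, hw⟩ := hspan j (by omega)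
    rw [krylovVec_succ, ← mulVec_mulVec, ← mulVec_mulVec, ih (by omega) w hw, hw]
    exact inv_transpose_mul_mul_mulVec_eq N V hNr (by rw [hz, krylovVec_succ, hNcancel])

end Matrix

/-- SISO moment matching at a single shift σ: if the projection subspace contains the
rational Krylov subspace of order `k`, the value and first `k-1` derivatives of the
transfer function are matched. Derivatives are expressed via
`G⁽ⁱ⁾(σ) = (-1)^i i! cᵀ ((σE-A)⁻¹E)^i (σE-A)⁻¹ b`. -/
theorem siso_moment_matching
    {n k : ℕ} (A E : Matrix (Fin n) (Fin n) ℂ) (b c : Fin n → ℂ)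
    (σ : ℂ) (hinv : IsUnit (A - σ • E))
    {q : ℕ} (V : Matrix (Fin n) (Fin q) ℂ)
    (hredE : IsUnit (σ • (Vᵀ * E * V) - Vᵀ * A * V))
    (v : ℕ → Fin n → ℂ)
    (hv0 : v 0 = (A - σ • E)⁻¹ *ᵥ b)
    (hvsucc : ∀ j, v (j + 1) = (A - σ • E)⁻¹ *ᵥ (E *ᵥ v j))
    (hspan : ∀ j < k, ∃ z : Fin q → ℂ, V *ᵥ z = v j) :
    ∀ i < k,
      ((-1 : ℂ) ^ i * (Nat.factorial i)) •
        (c ⬝ᵥ (((σ • E - A)⁻¹ * E) ^ i *ᵥ ((σ • E - A)⁻¹ *ᵥ b)))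
      = ((-1 : ℂ) ^ i * (Nat.factorial i)) •
        ((Vᵀ *ᵥ c) ⬝ᵥ
          (((σ • (Vᵀ * E * V) - Vᵀ * A * V)⁻¹ * (Vᵀ * E * V)) ^ i *ᵥ
            ((σ • (Vᵀ * E * V) - Vᵀ * A * V)⁻¹ *ᵥ (Vᵀ *ᵥ b)))) := by
  have hv : ∀ j, v j = krylovVec (A - σ • E) E b j := by
    intro j
    induction j with
    | zero => rw [hv0, krylovVec_zero]
    | succ j ih => rw [hvsucc, ih, krylovVec_succ]
  have hred : σ • (Vᵀ * E * V) - Vᵀ * A * V = -(Vᵀ * (A - σ • E) * V) := by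
    rw [Matrix.mul_sub, Matrix.sub_mul, Matrix.mul_smul, Matrix.smul_mul, neg_sub]
  have hredN : IsUnit (Vᵀ * (A - σ • E) * V) := by simpa [hred] using hredE.neg
  have hproj := mulVec_krylovVec_transpose_mul_mul hinv E b V hredN
    (fun j hj => by simpa only [hv] using hspan j hj)
  intro i hi
  change _ • (c ⬝ᵥ krylovVec (σ • E - A) E b i)
    = _ • ((Vᵀ *ᵥ c) ⬝ᵥ krylovVec (σ • (Vᵀ * E * V) - Vᵀ * A * V) (Vᵀ * E * V) (Vᵀ *ᵥ b) i)
  rw [hred, ← neg_sub, krylovVec_neg hinv, krylovVec_neg hredN, ← hproj i hi, dotProduct_smul,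
    dotProduct_smul, dotProduct_mulVec, ← mulVec_transpose]
end

section
/- Under the assumptions of the model-function optimality theorem, let additionally V, W ∈ ℂ^{n×q} satisfy A V - E V S* - B R* = 0 and Aᵀ W - Eᵀ W S* - Cᵀ L* = 0 (primitive bases at the optimal data), where the optimal frequencies σ*ᵢ are distinct and A - σ*ᵢE invertible. If the update condition holds and the composed bases are primitive, then V = V_M V_Mr and W = W_M W_Mr, and consequently the directly projected reduced model Σ_r = Wᵀ Σ V equals the two-stage reduced model Σ_Mr = W_Mrᵀ (W_Mᵀ Σ V_M) V_Mr. -/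
/-!
Column `i` of a primitive basis solves `(A - σᵢ E) x = B rᵢ`, so it is determined by the datum
`(σᵢ, rᵢ)` once `A - σᵢ E` is invertible. The update condition places each optimal datum at some
model-function index `j`; hence column `i` of `V` is column `j` of `V_M`. Projecting that equation
with `W_Mᵀ` shows that the unit vector `e_j` solves the shifted system of `Σ_M`, so it is column `i`
of `V_Mr`, and `V_M V_Mr` has column `V_M e_j`. The left bases are right bases of the transposed
system, and the reduced matrices then agree by associativity.
-/

open Matrix

namespace Matrix

variable {K : Type*} [CommRing K] {n m ι κ τ : Type*} [Fintype n]

theorem transpose_transpose_mul_mul (W : Matrix n κ K) (A : Matrix n n K)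
    (V : Matrix n ι K) : (Wᵀ * A * V)ᵀ = Vᵀ * Aᵀ * W := by
  rw [transpose_mul, transpose_mul, transpose_transpose, Matrix.mul_assoc]

variable [Fintype m] [Fintype ι] [DecidableEq ι]

/-- The paper's `A V - E V S - B R = 0` with `S = diag σ` and `R` the matrix with columns `r i`. -/
def IsPrimitiveBasis (A E : Matrix n n K) (B : Matrix n m K) (σ : ι → K) (r : ι → m → K)
    (V : Matrix n ι K) : Prop :=
  A * V - E * V * diagonal σ - B * of (fun k i => r i k) = 0

namespace IsPrimitiveBasis

variable {A E : Matrix n n K} {B : Matrix n m K}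

theorem mulVec_col {σ : ι → K} {r : ι → m → K} {V : Matrix n ι K}
    (hV : IsPrimitiveBasis A E B σ r V) (i : ι) :
    (A - σ i • E) *ᵥ V.col i = B *ᵥ r i := by
  have h : (A * V - E * V * diagonal σ - B * of (fun k i => r i k)) *ᵥ Pi.single i 1 = 0 := by
    rw [hV, zero_mulVec]
  have hσ : Pi.single i (σ i) = σ i • Pi.single i (1 : K) := by
    rw [← Pi.single_smul', smul_eq_mul, mul_one]
  rw [sub_mulVec, sub_mulVec, ← mulVec_mulVec, ← mulVec_mulVec, ← mulVec_mulVec,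
    diagonal_mulVec_single, mul_one, hσ, mulVec_smul, mulVec_smul, mulVec_single_one,
    mulVec_single_one, sub_eq_zero] at h
  rw [sub_mulVec, smul_mulVec]
  exact h

theorem col_eq_of_isUnit [DecidableEq n] {ι' : Type*} [Fintype ι'] [DecidableEq ι']
    {σ : ι → K} {r : ι → m → K} {V : Matrix n ι K} {σ' : ι' → K} {r' : ι' → m → K}
    {V' : Matrix n ι' K} (hV : IsPrimitiveBasis A E B σ r V) (hV' : IsPrimitiveBasis A E B σ' r' V')
    {i : ι} {j : ι'} (hunit : IsUnit (A - σ i • E)) (hσ : σ' j = σ i) (hr : r' j = r i) :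
    V'.col j = V.col i :=
  mulVec_injective_of_isUnit hunit <| by rw [hV.mulVec_col, ← hσ, hV'.mulVec_col, hr]

theorem projection_mulVec_single {σ : ι → K} {r : ι → m → K} {V : Matrix n ι K}
    (hV : IsPrimitiveBasis A E B σ r V) (W : Matrix n κ K) (j : ι) :
    (Wᵀ * A * V - σ j • (Wᵀ * E * V)) *ᵥ Pi.single j 1 = (Wᵀ * B) *ᵥ r j := by
  have hfactor : Wᵀ * A * V - σ j • (Wᵀ * E * V) = Wᵀ * (A - σ j • E) * V := by
    rw [Matrix.mul_sub, Matrix.sub_mul, Matrix.mul_smul, Matrix.smul_mul]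
  rw [hfactor, ← mulVec_mulVec, ← mulVec_mulVec, mulVec_single_one, hV.mulVec_col,
    mulVec_mulVec]

theorem eq_mul_of_update [DecidableEq n] [Fintype τ] [DecidableEq τ]
    {σM : ι → K} {rM : ι → m → K} {VM WM : Matrix n ι K} (hVM : IsPrimitiveBasis A E B σM rM VM)
    {σ : τ → K} {r : τ → m → K} {VMr : Matrix ι τ K}
    (hVMr : IsPrimitiveBasis (WMᵀ * A * VM) (WMᵀ * E * VM) (WMᵀ * B) σ r VMr)
    {V : Matrix n τ K} (hV : IsPrimitiveBasis A E B σ r V)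
    (hunit : ∀ i, IsUnit (A - σ i • E)) (hunitM : ∀ i, IsUnit (WMᵀ * A * VM - σ i • (WMᵀ * E * VM)))
    (hupdate : ∀ i, ∃ j, σM j = σ i ∧ rM j = r i) :
    V = VM * VMr := by
  refine ext_col fun i => ?_
  obtain ⟨j, hσ, hr⟩ := hupdate i
  have hVMr_col : VMr.col i = Pi.single j 1 :=
    mulVec_injective_of_isUnit (hunitM i) <| by
      rw [hVMr.mulVec_col, ← hσ, hVM.projection_mulVec_single, hr]
  calc V.col i = VM.col j := (hV.col_eq_of_isUnit hVM (hunit i) hσ hr).symm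
    _ = VM *ᵥ VMr.col i := by rw [hVMr_col, mulVec_single_one]
    _ = (VM * VMr).col i := rfl

end IsPrimitiveBasis

end Matrix

theorem model_function_composition_general
    {n nM q m p : ℕ}
    (A E : Matrix (Fin n) (Fin n) ℂ)
    (B : Matrix (Fin n) (Fin m) ℂ) (C : Matrix (Fin p) (Fin n) ℂ)
    -- model function interpolation data and primitive bases
    (σM : Fin nM → ℂ) (rM : Fin nM → Fin m → ℂ) (lM : Fin nM → Fin p → ℂ)
    (VM WM : Matrix (Fin n) (Fin nM) ℂ)
    (hVM : A * VM - E * VM * Matrix.diagonal σM - B * (Matrix.of fun k i => rM i k) = 0)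
    (hWM : Aᵀ * WM - Eᵀ * WM * Matrix.diagonal σM - Cᵀ * (Matrix.of fun k i => lM i k) = 0)
    -- the model function Σ_M = W_Mᵀ Σ V_M
    (AM EM : Matrix (Fin nM) (Fin nM) ℂ)
    (BM : Matrix (Fin nM) (Fin m) ℂ) (CM : Matrix (Fin p) (Fin nM) ℂ)
    (hAM : AM = WMᵀ * A * VM) (hEM : EM = WMᵀ * E * VM)
    (hBM : BM = WMᵀ * B) (hCM : CM = C * VM)
    -- optimal interpolation data and primitive bases for Σ_M
    (σO : Fin q → ℂ) (rO : Fin q → Fin m → ℂ) (lO : Fin q → Fin p → ℂ)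
    (hinvFull : ∀ i, IsUnit (A - σO i • E))
    (hinvM : ∀ i, IsUnit (AM - σO i • EM))
    (VMr WMr : Matrix (Fin nM) (Fin q) ℂ)
    (hVMr : AM * VMr - EM * VMr * Matrix.diagonal σO - BM * (Matrix.of fun k i => rO i k) = 0)
    (hWMr : AMᵀ * WMr - EMᵀ * WMr * Matrix.diagonal σO - CMᵀ * (Matrix.of fun k i => lO i k) = 0)
    -- update condition: every optimal triplet occurs among the model-function data
    (hupdate : ∀ i, ∃ j, σM j = σO i ∧ rM j = rO i ∧ lM j = lO i)
    -- primitive bases of the full-order model at the optimal data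
    (V W : Matrix (Fin n) (Fin q) ℂ)
    (hV : A * V - E * V * Matrix.diagonal σO - B * (Matrix.of fun k i => rO i k) = 0)
    (hW : Aᵀ * W - Eᵀ * W * Matrix.diagonal σO - Cᵀ * (Matrix.of fun k i => lO i k) = 0) :
    V = VM * VMr ∧ W = WM * WMr
    ∧ Wᵀ * E * V = WMrᵀ * (WMᵀ * E * VM) * VMr
    ∧ Wᵀ * A * V = WMrᵀ * (WMᵀ * A * VM) * VMr
    ∧ Wᵀ * B = WMrᵀ * (WMᵀ * B)
    ∧ C * V = (C * VM) * VMr := by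
  subst hAM hEM hBM hCM
  have hVeq : V = VM * VMr := IsPrimitiveBasis.eq_mul_of_update hVM hVMr hV hinvFull hinvM
    fun i => (hupdate i).imp fun _ h => ⟨h.1, h.2.1⟩
  have hWeq : W = WM * WMr := by
    refine IsPrimitiveBasis.eq_mul_of_update hWM (WM := VM) ?_ hW (fun i => ?_) (fun i => ?_)
      fun i => (hupdate i).imp fun _ h => ⟨h.1, h.2.2⟩
    · rwa [transpose_transpose_mul_mul, transpose_transpose_mul_mul, transpose_mul] at hWMr
    · simpa only [transpose_sub, transpose_smul] using (isUnit_transpose _).mpr (hinvFull i)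
    · simpa only [transpose_sub, transpose_smul, transpose_transpose_mul_mul] using
        (isUnit_transpose _).mpr (hinvM i)
  subst hVeq hWeq
  refine ⟨rfl, rfl, ?_, ?_, ?_, ?_⟩ <;> simp only [transpose_mul, Matrix.mul_assoc]

/-- Composition corollary of the model-function framework: the primitive bases at the
optimal data factor through the model-function bases, hence the directly projected
reduced model coincides with the two-stage reduced model. -/
theorem model_function_composition
    {n nM q m p : ℕ}
    (A E : Matrix (Fin n) (Fin n) ℂ)
    (B : Matrix (Fin n) (Fin m) ℂ) (C : Matrix (Fin p) (Fin n) ℂ)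
    -- model function interpolation data and primitive bases
    (σM : Fin nM → ℂ) (rM : Fin nM → Fin m → ℂ) (lM : Fin nM → Fin p → ℂ)
    (VM WM : Matrix (Fin n) (Fin nM) ℂ)
    (hVM : A * VM - E * VM * Matrix.diagonal σM - B * (Matrix.of fun k i => rM i k) = 0)
    (hWM : Aᵀ * WM - Eᵀ * WM * Matrix.diagonal σM - Cᵀ * (Matrix.of fun k i => lM i k) = 0)
    -- the model function Σ_M = W_Mᵀ Σ V_M
    (AM EM : Matrix (Fin nM) (Fin nM) ℂ)
    (BM : Matrix (Fin nM) (Fin m) ℂ) (CM : Matrix (Fin p) (Fin nM) ℂ)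
    (hAM : AM = WMᵀ * A * VM) (hEM : EM = WMᵀ * E * VM)
    (hBM : BM = WMᵀ * B) (hCM : CM = C * VM)
    -- optimal interpolation data and primitive bases for Σ_M
    (σO : Fin q → ℂ) (rO : Fin q → Fin m → ℂ) (lO : Fin q → Fin p → ℂ)
    (hdist : Function.Injective σO)
    (hinvFull : ∀ i, IsUnit (A - σO i • E))
    (hinvM : ∀ i, IsUnit (AM - σO i • EM))
    (VMr WMr : Matrix (Fin nM) (Fin q) ℂ)
    (hVMr : AM * VMr - EM * VMr * Matrix.diagonal σO - BM * (Matrix.of fun k i => rO i k) = 0)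
    (hWMr : AMᵀ * WMr - EMᵀ * WMr * Matrix.diagonal σO - CMᵀ * (Matrix.of fun k i => lO i k) = 0)
    -- update condition: every optimal triplet occurs among the model-function data
    (hupdate : ∀ i, ∃ j, σM j = σO i ∧ rM j = rO i ∧ lM j = lO i)
    -- primitive bases of the full-order model at the optimal data
    (V W : Matrix (Fin n) (Fin q) ℂ)
    (hV : A * V - E * V * Matrix.diagonal σO - B * (Matrix.of fun k i => rO i k) = 0)
    (hW : Aᵀ * W - Eᵀ * W * Matrix.diagonal σO - Cᵀ * (Matrix.of fun k i => lO i k) = 0) :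
    V = VM * VMr ∧ W = WM * WMr
    ∧ Wᵀ * E * V = WMrᵀ * (WMᵀ * E * VM) * VMr
    ∧ Wᵀ * A * V = WMrᵀ * (WMᵀ * A * VM) * VMr
    ∧ Wᵀ * B = WMrᵀ * (WMᵀ * B)
    ∧ C * V = (C * VM) * VMr :=
  model_function_composition_general A E B C σM rM lM VM WM hVM hWM AM EM BM CM hAM hEM hBM hCM σO
    rO lO hinvFull hinvM VMr WMr hVMr hWMr hupdate V W hV hW
end

section
/- With Π = V (Wᵀ(A - σE)V)⁻¹ Wᵀ (A - σE) as above and G, G_r the full and reduced transfer functions, the interpolation error at σ factors as G(σ) - G_r(σ) = C (σE - A)⁻¹ (I - (A - σE)Π(A - σE)⁻¹)(A - σE)(I - Π)(A - σE)⁻¹ B · (-1)², and in particular if (A - σE)⁻¹ B r ∈ range(V) then (I - Π)(A - σE)⁻¹ B r = 0, which implies (G(σ) - G_r(σ)) r = 0. -/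
open Matrix

/-! Write `M = A - σE`. Since `P M⁻¹ = V (WᵀMV)⁻¹ Wᵀ`, the reduced resolvent seen through `V`
is `P` applied to the full one, so `G - G_r = -C (I - P) M⁻¹ B`. The stated product equals this
because `P` is idempotent and `M⁻¹ (I - M P M⁻¹) M = I - P`; and `I - P` vanishes on `range V`
because `P V = V`. -/

namespace Matrix

variable {R : Type*} [CommRing R] {l m n q : Type*} [Fintype n] [Fintype q] [DecidableEq q]

theorem inv_neg [DecidableEq n] (M : Matrix n n R) : (-M)⁻¹ = -M⁻¹ := by
  by_cases hM : IsUnit M.det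
  · exact inv_eq_left_inv (by rw [neg_mul_neg, nonsing_inv_mul M hM])
  · have hnM : ¬IsUnit (-M).det := by
      rwa [det_neg, IsUnit.mul_iff, and_iff_right ((isUnit_neg_one (α := R)).pow _)]
    rw [nonsing_inv_apply_not_isUnit _ hM, nonsing_inv_apply_not_isUnit _ hnM, neg_zero]

/-- The projector onto `range V` along `ker (Wᵀ * M)`. -/
noncomputable def obliqueProjection (V W : Matrix n q R) (M : Matrix n n R) : Matrix n n R :=
  V * (Wᵀ * M * V)⁻¹ * Wᵀ * M

variable {V W : Matrix n q R} {M : Matrix n n R}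

theorem obliqueProjection_mul_self (hR : IsUnit (Wᵀ * M * V)) :
    obliqueProjection V W M * V = V := by
  calc obliqueProjection V W M * V = V * ((Wᵀ * M * V)⁻¹ * (Wᵀ * M * V)) := by
        simp only [obliqueProjection, Matrix.mul_assoc]
    _ = V := by rw [nonsing_inv_mul _ ((isUnit_iff_isUnit_det _).mp hR), Matrix.mul_one]

theorem isIdempotentElem_obliqueProjection (hR : IsUnit (Wᵀ * M * V)) :
    IsIdempotentElem (obliqueProjection V W M) := by
  calc obliqueProjection V W M * obliqueProjection V W M
      = obliqueProjection V W M * V * ((Wᵀ * M * V)⁻¹ * Wᵀ * M) := by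
        simp only [obliqueProjection, Matrix.mul_assoc]
    _ = obliqueProjection V W M := by
        rw [obliqueProjection_mul_self hR, obliqueProjection]; simp only [Matrix.mul_assoc]

theorem one_sub_obliqueProjection_mulVec_self [DecidableEq n] (hR : IsUnit (Wᵀ * M * V))
    (z : q → R) :
    (1 - obliqueProjection V W M) *ᵥ (V *ᵥ z) = 0 := by
  rw [sub_mulVec, one_mulVec, mulVec_mulVec, obliqueProjection_mul_self hR, sub_self]

theorem obliqueProjection_mul_inv [DecidableEq n] (hM : IsUnit M) :
    obliqueProjection V W M * M⁻¹ = V * (Wᵀ * M * V)⁻¹ * Wᵀ :=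
  mul_nonsing_inv_cancel_right _ _ ((isUnit_iff_isUnit_det _).mp hM)

theorem mul_inv_mul_sub_reduced_eq [DecidableEq n] [Fintype m] (hM : IsUnit M)
    (C : Matrix l n R) (B : Matrix n m R) :
    C * M⁻¹ * B - C * V * (Wᵀ * M * V)⁻¹ * (Wᵀ * B) =
      C * (1 - obliqueProjection V W M) * M⁻¹ * B := by
  rw [Matrix.mul_sub, Matrix.mul_one, Matrix.sub_mul, Matrix.sub_mul, Matrix.mul_assoc C _ M⁻¹,
    obliqueProjection_mul_inv hM]
  simp only [Matrix.mul_assoc]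

theorem inv_mul_one_sub_conj_mul [DecidableEq n] {P : Matrix n n R} (hM : IsUnit M) :
    M⁻¹ * (1 - M * P * M⁻¹) * M = 1 - P := by
  have hd := (isUnit_iff_isUnit_det _).mp hM
  rw [Matrix.mul_sub, Matrix.sub_mul, Matrix.mul_one, nonsing_inv_mul _ hd, Matrix.mul_assoc M P,
    nonsing_inv_mul_cancel_left _ _ hd, Matrix.mul_assoc, nonsing_inv_mul _ hd, Matrix.mul_one]

end Matrix

/-- Error factorization for projection-based interpolation: with the oblique projector
`P = V (Wᵀ(A-σE)V)⁻¹ Wᵀ (A-σE)`, the interpolation error factors through `I - P`; in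
particular, if `(A - σE)⁻¹ B r ∈ range(V)` then `(I - P)(A - σE)⁻¹ B r = 0` and hence
`(G(σ) - G_r(σ)) r = 0`. -/
theorem interpolation_error_factorization
    {n m p q : ℕ}
    (A E : Matrix (Fin n) (Fin n) ℂ)
    (B : Matrix (Fin n) (Fin m) ℂ) (C : Matrix (Fin p) (Fin n) ℂ)
    (V W : Matrix (Fin n) (Fin q) ℂ)
    (σ : ℂ) (r : Fin m → ℂ)
    (hfull : IsUnit (A - σ • E))
    (hred : IsUnit (Wᵀ * (A - σ • E) * V))
    (P : Matrix (Fin n) (Fin n) ℂ)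
    (hP : P = V * (Wᵀ * (A - σ • E) * V)⁻¹ * Wᵀ * (A - σ • E))
    (G Gr : Matrix (Fin p) (Fin m) ℂ)
    (hG : G = C * (σ • E - A)⁻¹ * B)
    (hGr : Gr = (C * V) * (σ • (Wᵀ * E * V) - Wᵀ * A * V)⁻¹ * (Wᵀ * B)) :
    G - Gr = ((-1 : ℂ) ^ 2) •
        (C * (σ • E - A)⁻¹ * (1 - (A - σ • E) * P * (A - σ • E)⁻¹) * (A - σ • E) *
          (1 - P) * (A - σ • E)⁻¹ * B)
    ∧ ((∃ z : Fin q → ℂ, V *ᵥ z = (A - σ • E)⁻¹ *ᵥ (B *ᵥ r)) →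
        (1 - P) *ᵥ ((A - σ • E)⁻¹ *ᵥ (B *ᵥ r)) = 0 ∧ (G - Gr) *ᵥ r = 0) := by
  have hP' : P = obliqueProjection V W (A - σ • E) := hP
  have hneg : σ • E - A = -(A - σ • E) := (neg_sub _ _).symm
  have hneg_red : σ • (Wᵀ * E * V) - Wᵀ * A * V = -(Wᵀ * (A - σ • E) * V) := by
    simp only [Matrix.mul_sub, Matrix.sub_mul, Matrix.mul_smul, Matrix.smul_mul, neg_sub]
  have herr : G - Gr = -(C * (1 - P) * (A - σ • E)⁻¹ * B) := by
    rw [hG, hGr, hneg, hneg_red, Matrix.inv_neg, Matrix.inv_neg, Matrix.mul_neg, Matrix.mul_neg,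
      Matrix.neg_mul, Matrix.neg_mul, neg_sub_neg, ← neg_sub, mul_inv_mul_sub_reduced_eq hfull, hP']
  have hidem : IsIdempotentElem (1 - P) :=
    hP' ▸ (isIdempotentElem_obliqueProjection hred).one_sub
  refine ⟨?_, fun ⟨z, hz⟩ => ?_⟩
  · calc G - Gr = -(C * ((1 - P) * (1 - P)) * (A - σ • E)⁻¹ * B) := by rw [herr, hidem.eq]
      _ = _ := by
        rw [hneg, Matrix.inv_neg, ← inv_mul_one_sub_conj_mul hfull]
        simp only [neg_one_sq, one_smul, Matrix.mul_neg, Matrix.neg_mul, Matrix.mul_assoc]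
  · have hx : (1 - P) *ᵥ ((A - σ • E)⁻¹ *ᵥ (B *ᵥ r)) = 0 := by
      rw [← hz, hP']; exact one_sub_obliqueProjection_mulVec_self hred z
    refine ⟨hx, ?_⟩
    rw [herr, neg_mulVec, ← mulVec_mulVec, ← mulVec_mulVec, ← mulVec_mulVec, hx,
      mulVec_zero, neg_zero]
end
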